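/- arXiv:1007.5269 — 2 statements merged into one kernel-verified Lean document; each statement's English description precedes it below -/
import Mathlib

section
/- Let θ > 0, let (θ_i)_{i≥1} be a non-negative real sequence with θ_* := sup_i θ_i < ∞ and θ*' := max(θ, θ_*), and for m ∈ ℕ set δ(m,θ) := sup_{j≥0} | (1/m)·∑_{i=1}^m θ_{jm+i} − θ |. Let (y_i)_{i≥1} be a real sequence, let 0 ≤ l < n and m ≥ 1, and set ‖y‖ := max_{l<i≤n} |y_i|. Then |∑_{i=l+1}^n (θ_i − θ)·y_i| ≤ 2mθ*'·‖y‖ + δ(m,θ)·∑_{i=1}^n |y_i| + m^{−1}·θ_*·∑_{l'=1}^m ∑_{l''=1}^m ∑_{j=1}^{⌊n/m⌋−1} |y_{jm+l'} − y_{jm+l''}|. -/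
/-!
Cut `(l, n]` into the full blocks `(j m, (j + 1) m]` it contains and at most `2 m` leftover
indices at the two ends, each leftover term being at most `θ*' ‖y‖`. On a block `s` of size `m`
the sum splits exactly as
`∑ i ∈ s, (θᵢ - θ) yᵢ = (m⁻¹ ∑ i ∈ s, θᵢ - θ) ∑ j ∈ s, yⱼ + m⁻¹ ∑ i ∈ s, ∑ j ∈ s, θᵢ (yᵢ - yⱼ)`,
where the first term is controlled by `δ(m, θ)` and the second by `θ_*` and the oscillation of
`y` on the block.
-/

open Finset

theorem sum_Icc_one_add_eq_sum_Ioc {M : Type*} [AddCommMonoid M] (f : ℕ → M) (a m : ℕ) :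
    ∑ i ∈ Icc 1 m, f (a + i) = ∑ i ∈ Ioc a (a + m), f i := by
  rw [← Icc_add_one_left_eq_Ioc, ← map_add_left_Icc 1 m a, sum_map]
  rfl

theorem sum_Ico_sum_Icc_mul_add {M : Type*} [AddCommMonoid M] (f : ℕ → M) (m : ℕ) {b k : ℕ}
    (hbk : b ≤ k) :
    ∑ j ∈ Ico b k, ∑ i ∈ Icc 1 m, f (j * m + i) = ∑ i ∈ Ioc (b * m) (k * m), f i := by
  induction k, hbk using Nat.le_induction with
  | base => simp
  | succ k hbk ih =>
    rw [sum_Ico_succ_top hbk, ih, sum_Icc_one_add_eq_sum_Ioc, add_mul, one_mul,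
      sum_Ioc_consecutive _ (Nat.mul_le_mul_right m hbk) (Nat.le_add_right _ m)]

theorem abs_sum_le_of_card_le {ι : Type*} (s : Finset ι) (f : ι → ℝ) {c : ℕ} {B : ℝ}
    (hs : #s ≤ c) (hB : 0 ≤ B) (hf : ∀ i ∈ s, |f i| ≤ B) :
    |∑ i ∈ s, f i| ≤ c * B := calc
  |∑ i ∈ s, f i| ≤ ∑ i ∈ s, |f i| := abs_sum_le_sum_abs _ _
  _ ≤ #s * B := by simpa using sum_le_card_nsmul s _ _ hf
  _ ≤ c * B := by gcongr

theorem abs_sum_Ioc_le_of_le {f : ℕ → ℝ} {l n p q c : ℕ} {B : ℝ} (hB0 : 0 ≤ B)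
    (hB : ∀ i ∈ Ioc l n, |f i| ≤ B) (hp : l ≤ p) (hq : q ≤ n) (hc : q - p ≤ c) :
    |∑ i ∈ Ioc p q, f i| ≤ c * B :=
  abs_sum_le_of_card_le _ _ (by rwa [Nat.card_Ioc]) hB0 fun i hi => hB i (Ioc_subset_Ioc hp hq hi)

theorem sum_sub_mul_eq_mean_sub_mul_add {ι K : Type*} [Field K] {s : Finset ι}
    (hs : (#s : K) ≠ 0) (a y : ι → K) (θ : K) :
    ∑ i ∈ s, (a i - θ) * y i =
      ((#s : K)⁻¹ * ∑ i ∈ s, a i - θ) * ∑ i ∈ s, y i +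
        (#s : K)⁻¹ * ∑ i ∈ s, ∑ j ∈ s, a i * (y i - y j) := by
  simp only [mul_sub, sum_sub_distrib, sum_const, nsmul_eq_mul, ← mul_sum, ← sum_mul, sub_mul]
  field_simp
  ring

theorem abs_sum_sub_mul_le_mean {ι : Type*} (s : Finset ι) (a y : ι → ℝ) (θ Θ : ℝ)
    (ha : ∀ i ∈ s, |a i| ≤ Θ) :
    |∑ i ∈ s, (a i - θ) * y i| ≤
      |(#s : ℝ)⁻¹ * ∑ i ∈ s, a i - θ| * ∑ i ∈ s, |y i| +
        (#s : ℝ)⁻¹ * Θ * ∑ i ∈ s, ∑ j ∈ s, |y i - y j| := by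
  obtain rfl | hs := s.eq_empty_or_nonempty
  · simp
  rw [sum_sub_mul_eq_mean_sub_mul_add (Nat.cast_ne_zero.mpr hs.card_pos.ne')]
  refine (abs_add_le _ _).trans (add_le_add ?_ ?_)
  · rw [abs_mul]
    gcongr
    exact abs_sum_le_sum_abs _ _
  · rw [abs_mul, abs_inv, Nat.abs_cast, mul_assoc]
    refine mul_le_mul_of_nonneg_left ?_ (by positivity)
    calc |∑ i ∈ s, ∑ j ∈ s, a i * (y i - y j)|
        ≤ ∑ i ∈ s, ∑ j ∈ s, |a i * (y i - y j)| :=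
          (abs_sum_le_sum_abs _ _).trans (sum_le_sum fun i _ => abs_sum_le_sum_abs _ _)
      _ ≤ ∑ i ∈ s, ∑ j ∈ s, Θ * |y i - y j| := by
          gcongr with i hi j
          rw [abs_mul]
          exact mul_le_mul_of_nonneg_right (ha i hi) (abs_nonneg _)
      _ = Θ * ∑ i ∈ s, ∑ j ∈ s, |y i - y j| := by simp only [mul_sum]

theorem abs_mean_sub_le {ι : Type*} {s : Finset ι} (hs : s.Nonempty) (a : ι → ℝ) (θ : ℝ)
    {Θ : ℝ} (ha : ∀ i ∈ s, |a i| ≤ Θ) :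
    |(#s : ℝ)⁻¹ * ∑ i ∈ s, a i - θ| ≤ Θ + |θ| := by
  obtain ⟨i₀, hi₀⟩ := hs
  have hcard : (0 : ℝ) < #s := by exact_mod_cast card_pos.mpr ⟨i₀, hi₀⟩
  have hsum := abs_sum_le_of_card_le s a le_rfl ((abs_nonneg _).trans (ha i₀ hi₀)) ha
  calc _ ≤ |(#s : ℝ)⁻¹ * ∑ i ∈ s, a i| + |θ| := abs_sub _ _
    _ ≤ (#s : ℝ)⁻¹ * (#s * Θ) + |θ| := by
        rw [abs_mul, abs_inv, Nat.abs_cast]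
        gcongr
    _ = Θ + |θ| := by rw [inv_mul_cancel_left₀ hcard.ne']

theorem Real.le_biSup_finset {ι : Type*} {s : Finset ι} {f : ι → ℝ} {i : ι} (hi : i ∈ s)
    (hfi : 0 ≤ f i) : f i ≤ ⨆ j ∈ s, f j :=
  not_lt.mp fun h => lt_irrefl _
    ((s.finite_toSet.ciSup_lt_iff ⟨i, hi, by simpa using hfi⟩).mp h i hi)

theorem abs_sum_blocks_sub_mul_le (θ Θ δ : ℝ) (θi y : ℕ → ℝ) (m : ℕ) {b k : ℕ} (hbk : b ≤ k)
    (hΘ : ∀ i, 1 ≤ i → |θi i| ≤ Θ)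
    (hδ : ∀ j, |1 / (m : ℝ) * ∑ i ∈ Icc 1 m, θi (j * m + i) - θ| ≤ δ) :
    |∑ i ∈ Ioc (b * m) (k * m), (θi i - θ) * y i| ≤
      δ * ∑ i ∈ Ioc (b * m) (k * m), |y i| +
        (m : ℝ)⁻¹ * Θ * ∑ l' ∈ Icc 1 m, ∑ l'' ∈ Icc 1 m, ∑ j ∈ Ico b k,
          |y (j * m + l') - y (j * m + l'')| := by
  have hblock : ∀ j, |∑ i ∈ Icc 1 m, (θi (j * m + i) - θ) * y (j * m + i)| ≤
      δ * ∑ i ∈ Icc 1 m, |y (j * m + i)| +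
        (m : ℝ)⁻¹ * Θ * ∑ l' ∈ Icc 1 m, ∑ l'' ∈ Icc 1 m, |y (j * m + l') - y (j * m + l'')| := by
    intro j
    have h := abs_sum_sub_mul_le_mean (Icc 1 m) (fun i => θi (j * m + i))
      (fun i => y (j * m + i)) θ Θ fun i hi => hΘ _ (by grind)
    simp only [Nat.card_Icc, add_tsub_cancel_right] at h
    refine h.trans (add_le_add_left (mul_le_mul_of_nonneg_right ?_ (by positivity)) _)
    simpa only [one_div] using hδ j
  rw [← sum_Ico_sum_Icc_mul_add _ _ hbk, ← sum_Ico_sum_Icc_mul_add _ _ hbk]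
  calc _ ≤ ∑ j ∈ Ico b k, |∑ i ∈ Icc 1 m, (θi (j * m + i) - θ) * y (j * m + i)| :=
        abs_sum_le_sum_abs _ _
    _ ≤ _ := sum_le_sum fun j _ => hblock j
    _ = _ := by
      rw [sum_add_distrib, ← mul_sum, ← mul_sum, sum_comm]
      simp only [sum_comm (s := Ico b k)]

theorem abs_sum_Ioc_sub_mul_le (θ Θ δ B : ℝ) (θi y : ℕ → ℝ) (l n : ℕ) {m : ℕ} (hm : 0 < m)
    (hB0 : 0 ≤ B) (hB : ∀ i ∈ Ioc l n, |(θi i - θ) * y i| ≤ B)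
    (hΘ : ∀ i, 1 ≤ i → |θi i| ≤ Θ)
    (hδ : ∀ j, |1 / (m : ℝ) * ∑ i ∈ Icc 1 m, θi (j * m + i) - θ| ≤ δ) :
    |∑ i ∈ Ioc l n, (θi i - θ) * y i| ≤
      2 * m * B + δ * ∑ i ∈ Icc 1 n, |y i| +
        (m : ℝ)⁻¹ * Θ * ∑ l' ∈ Icc 1 m, ∑ l'' ∈ Icc 1 m, ∑ j ∈ Icc 1 (n / m - 1),
          |y (j * m + l') - y (j * m + l'')| := by
  have hδ0 : 0 ≤ δ := (abs_nonneg _).trans (hδ 0)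
  have hΘ0 : 0 ≤ Θ := (abs_nonneg _).trans (hΘ 1 le_rfl)
  -- the full blocks `(j m, (j + 1) m]` inside `(l, n]` are those with `l / m < j < n / m`
  set b := l / m + 1
  set k := n / m
  have hlb : l < b * m := by
    simpa [b, add_mul] using Nat.lt_div_mul_add (a := l) hm
  have hbl : b * m ≤ l + m := by
    simpa [b, add_mul] using Nat.div_mul_le_self l m
  have hkn : k * m ≤ n := Nat.div_mul_le_self n m
  have hnk : n < k * m + m := Nat.lt_div_mul_add hm
  have hb1 : 1 ≤ b := Nat.le_add_left 1 _
  rcases le_or_gt b k with hbk | hkb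
  · have hbkm : b * m ≤ k * m := Nat.mul_le_mul_right m hbk
    rw [← sum_Ioc_consecutive _ hlb.le (hbkm.trans hkn),
      ← sum_Ioc_consecutive _ hbkm hkn, ← add_assoc]
    have hmiddle := abs_sum_blocks_sub_mul_le θ Θ δ θi y m hbk hΘ hδ
    have hhead := abs_sum_Ioc_le_of_le (c := m) hB0 hB le_rfl (hbkm.trans hkn) (by omega)
    have htail := abs_sum_Ioc_le_of_le (c := m) hB0 hB (hlb.le.trans hbkm) le_rfl (by omega)
    calc _ ≤ m * B + (δ * ∑ i ∈ Ioc (b * m) (k * m), |y i| +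
          (m : ℝ)⁻¹ * Θ * ∑ l' ∈ Icc 1 m, ∑ l'' ∈ Icc 1 m, ∑ j ∈ Ico b k,
            |y (j * m + l') - y (j * m + l'')|) + m * B :=
          (abs_add_three _ _ _).trans (add_le_add_three hhead hmiddle htail)
      _ ≤ m * B + (δ * ∑ i ∈ Icc 1 n, |y i| +
          (m : ℝ)⁻¹ * Θ * ∑ l' ∈ Icc 1 m, ∑ l'' ∈ Icc 1 m, ∑ j ∈ Icc 1 (k - 1),
            |y (j * m + l') - y (j * m + l'')|) + m * B := by
          gcongr
          · intro i hi
            simp only [mem_Ioc, mem_Icc] at hi ⊢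
            omega
          · intro j hj
            simp only [mem_Ico, mem_Icc] at hj ⊢
            omega
      _ = _ := by ring
  · have hnl : n - l ≤ 2 * m := by
      have : (k + 1) * m ≤ b * m := Nat.mul_le_mul_right m hkb
      rw [add_mul, one_mul] at this
      omega
    have hwhole := abs_sum_Ioc_le_of_le hB0 hB le_rfl le_rfl hnl
    push_cast at hwhole
    have : 0 ≤ (m : ℝ)⁻¹ * Θ * ∑ l' ∈ Icc 1 m, ∑ l'' ∈ Icc 1 m, ∑ j ∈ Icc 1 (n / m - 1),
        |y (j * m + l') - y (j * m + l'')| := by positivity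
    have : 0 ≤ δ * ∑ i ∈ Icc 1 n, |y i| := by positivity
    linarith

theorem stmt4_general (θ : ℝ) (hθ : 0 < θ) (θi : ℕ → ℝ) (hnn : ∀ i, 0 ≤ θi i)
    (hbdd : BddAbove (Set.range fun i => θi (i + 1)))
    (y : ℕ → ℝ) (l n m : ℕ) (hm : 1 ≤ m) :
    |∑ i ∈ Icc (l + 1) n, (θi i - θ) * y i| ≤
      2 * m * max θ (⨆ i, θi (i + 1)) * (⨆ i ∈ Icc (l + 1) n, |y i|) +
      (⨆ j : ℕ, |(1 / (m : ℝ)) * ∑ i ∈ Icc 1 m, θi (j * m + i) - θ|) *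
        ∑ i ∈ Icc 1 n, |y i| +
      (m : ℝ)⁻¹ * (⨆ i, θi (i + 1)) *
        ∑ l' ∈ Icc 1 m, ∑ l'' ∈ Icc 1 m, ∑ j ∈ Icc 1 (n / m - 1),
          |y (j * m + l') - y (j * m + l'')| := by
  set Θ := ⨆ i, θi (i + 1)
  set Y := ⨆ i ∈ Icc (l + 1) n, |y i|
  have hθi_le : ∀ i, 1 ≤ i → θi i ≤ Θ := fun i hi => by
    simpa [Nat.sub_add_cancel hi] using le_ciSup hbdd (i - 1)
  have hΘ : ∀ i, 1 ≤ i → |θi i| ≤ Θ := fun i hi =>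
    (abs_of_nonneg (hnn i)).trans_le (hθi_le i hi)
  have hδ_bdd : BddAbove (Set.range fun j : ℕ =>
      |(1 / (m : ℝ)) * ∑ i ∈ Icc 1 m, θi (j * m + i) - θ|) :=
    ⟨Θ + |θ|, Set.forall_mem_range.mpr fun j => by
      simpa using abs_mean_sub_le (nonempty_Icc.mpr hm) (fun i => θi (j * m + i)) θ
        fun i hi => hΘ _ (by grind)⟩
  have hY : ∀ i ∈ Icc (l + 1) n, |y i| ≤ Y := fun i hi =>
    Real.le_biSup_finset (f := fun i => |y i|) hi (abs_nonneg _)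
  have hY0 : 0 ≤ Y := Real.iSup_nonneg fun i => Real.iSup_nonneg fun _ => abs_nonneg _
  have hC0 : 0 ≤ max θ Θ := hθ.le.trans (le_max_left _ _)
  have hC : ∀ i, 1 ≤ i → |θi i - θ| ≤ max θ Θ := fun i hi =>
    abs_sub_le_of_nonneg_of_le (hnn i) ((hθi_le i hi).trans (le_max_right _ _)) hθ.le
      (le_max_left _ _)
  have hB : ∀ i ∈ Ioc l n, |(θi i - θ) * y i| ≤ max θ Θ * Y := fun i hi => by
    rw [abs_mul]
    exact mul_le_mul (hC i (by grind)) (hY i (by grind)) (abs_nonneg _) hC0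
  rw [Icc_add_one_left_eq_Ioc]
  exact (abs_sum_Ioc_sub_mul_le θ Θ _ _ θi y l n hm (mul_nonneg hC0 hY0) hB hΘ
    fun j => le_ciSup hδ_bdd j).trans_eq (by ring)

/-- Lemma 5.1, second inequality. Here `θ_* = ⨆_{i≥1} θᵢ`, `θ*' = max(θ, θ_*)` and
`δ(m,θ) = sup_{j≥0} |(1/m)∑_{i=1}^m θ_{jm+i} − θ|`. -/
theorem stmt4 (θ : ℝ) (hθ : 0 < θ) (θi : ℕ → ℝ) (hnn : ∀ i, 0 ≤ θi i)
    (hbdd : BddAbove (Set.range fun i => θi (i + 1)))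
    (y : ℕ → ℝ) (l n m : ℕ) (hln : l < n) (hm : 1 ≤ m) :
    |∑ i ∈ Icc (l + 1) n, (θi i - θ) * y i| ≤
      2 * m * max θ (⨆ i, θi (i + 1)) * (⨆ i ∈ Icc (l + 1) n, |y i|) +
      (⨆ j : ℕ, |(1 / (m : ℝ)) * ∑ i ∈ Icc 1 m, θi (j * m + i) - θ|) *
        ∑ i ∈ Icc 1 n, |y i| +
      (m : ℝ)⁻¹ * (⨆ i, θi (i + 1)) *
        ∑ l' ∈ Icc 1 m, ∑ l'' ∈ Icc 1 m, ∑ j ∈ Icc 1 (n / m - 1),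
          |y (j * m + l') - y (j * m + l'')| :=
  stmt4_general θ hθ θi hnn hbdd y l n m hm
end

section
/- Let θ > 0, let (θ_i)_{i≥1} be a non-negative real sequence with θ_* := sup_i θ_i < ∞ and θ*' := max(θ, θ_*), and for m ∈ ℕ set δ(m,θ) := sup_{j≥0} | (1/m)·∑_{i=1}^m θ_{jm+i} − θ |. Let T be a ℤ₊-valued random variable, let k ∈ ℕ, and let 0 ≤ l < n and m ≥ 1. Then |∑_{i=l+1}^n (θ_i − θ)·P[T+i = k]| ≤ δ(m,θ) + m·(2θ*' + (1/6)·θ_*·m)·d_TV(L(T), L(T+1)). -/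
open MeasureTheory ProbabilityTheory Finset

/-!
Write `p i = P[T + i = k]`, `a i = θ_{i+1}`, and compare `a` with its average over the block of
length `m` containing `i`. The block averages are within `δ(m,θ)` of `θ` and `∑ p i ≤ 1`, which
gives the first term. The remainder `a - blockAvg` sums to zero over every block, so its partial
sums are at most `m θ_* / 2`, and Abel summation bounds its contribution by `m θ_* / 2` times
`p (l+1) + p n + ∑ |p (i+1) - p i|`. Each `p i` equals `μ A - ν A` for `A = {j | j + i ≤ k}`,
where `μ, ν` are the laws of `T` and `T + 1`, so it is at most `d_TV`; the increments of `p` are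
differences of `μ` and `ν` on the disjoint sets `{j | j + i = k}`, so they add up to at most
`2 d_TV`. Altogether the second term is at most `2 m θ_* d_TV`.
-/

noncomputable def dTV {α : Type*} [MeasurableSpace α] (μ ν : Measure α) : ℝ :=
  ⨆ s : {s : Set α // MeasurableSet s}, |(μ s.1).toReal - (ν s.1).toReal|

lemma sum_abs_le_two_mul_of_abs_sum_le {ι : Type*} (S : Finset ι) (x : ι → ℝ) {c : ℝ}
    (h : ∀ U ⊆ S, |∑ i ∈ U, x i| ≤ c) : ∑ i ∈ S, |x i| ≤ 2 * c := by
  classical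
  rw [← sum_filter_add_sum_filter_not S (fun i => 0 ≤ x i)]
  have hpos : ∑ i ∈ S.filter (fun i => 0 ≤ x i), |x i| =
      ∑ i ∈ S.filter (fun i => 0 ≤ x i), x i :=
    sum_congr rfl fun i hi => abs_of_nonneg (mem_filter.1 hi).2
  have hneg : ∑ i ∈ S.filter (fun i => ¬0 ≤ x i), |x i| =
      -∑ i ∈ S.filter (fun i => ¬0 ≤ x i), x i := by
    rw [← sum_neg_distrib]
    exact sum_congr rfl fun i hi => abs_of_neg (not_le.1 (mem_filter.1 hi).2)
  have h₁ := (le_abs_self _).trans (h _ (filter_subset (fun i => 0 ≤ x i) S))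
  have h₂ := (neg_le_abs _).trans (h _ (filter_subset (fun i => ¬0 ≤ x i) S))
  linarith

lemma abs_sum_mul_le_of_abs_le {ι : Type*} (S : Finset ι) {x w : ι → ℝ} {c : ℝ}
    (hx : ∀ i ∈ S, |x i| ≤ c) (hc : 0 ≤ c) (hw : ∀ i ∈ S, 0 ≤ w i) (hw₁ : ∑ i ∈ S, w i ≤ 1) :
    |∑ i ∈ S, x i * w i| ≤ c :=
  calc |∑ i ∈ S, x i * w i|
      ≤ ∑ i ∈ S, |x i * w i| := abs_sum_le_sum_abs _ _
    _ ≤ ∑ i ∈ S, c * w i := sum_le_sum fun i hi => by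
        rw [abs_mul, abs_of_nonneg (hw i hi)]
        exact mul_le_mul_of_nonneg_right (hx i hi) (hw i hi)
    _ = c * ∑ i ∈ S, w i := (mul_sum _ _ _).symm
    _ ≤ c := mul_le_of_le_one_right hc hw₁

lemma abs_sum_Ico_mul_le (p g : ℕ → ℝ) {C : ℝ} (hG : ∀ k, |∑ i ∈ range k, g i| ≤ C)
    {l n : ℕ} (hln : l < n) :
    |∑ i ∈ Ico l n, p i * g i| ≤
      C * (|p (n - 1)| + |p l| + ∑ i ∈ Ico l (n - 1), |p (i + 1) - p i|) := by
  have hterm : ∀ q k, |q * ∑ i ∈ range k, g i| ≤ C * |q| := fun q k => by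
    rw [abs_mul, mul_comm]
    exact mul_le_mul_of_nonneg_right (hG k) (abs_nonneg q)
  have hsum : |∑ i ∈ Ico l (n - 1), (p (i + 1) - p i) * ∑ j ∈ range (i + 1), g j| ≤
      C * ∑ i ∈ Ico l (n - 1), |p (i + 1) - p i| := by
    rw [mul_sum]
    exact (abs_sum_le_sum_abs _ _).trans (sum_le_sum fun i _ => hterm _ _)
  have hparts := sum_Ico_by_parts p g hln
  simp only [smul_eq_mul] at hparts
  rw [hparts]
  calc _ ≤ |p (n - 1) * ∑ i ∈ range n, g i| + |p l * ∑ i ∈ range l, g i| + _ :=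
        (abs_sub _ _).trans (add_le_add_left (abs_sub _ _) _)
    _ ≤ _ := by linarith [hterm (p (n - 1)) n, hterm (p l) l]

lemma mul_add_div_eq_of_lt (j : ℕ) {m t : ℕ} (ht : t < m) : (j * m + t) / m = j := by
  rw [mul_comm, Nat.mul_add_div (Nat.zero_lt_of_lt ht), Nat.div_eq_of_lt ht, add_zero]

noncomputable def blockAvg (a : ℕ → ℝ) (m j : ℕ) : ℝ := (∑ t ∈ range m, a (j * m + t)) / m

section blockAvg

variable {a : ℕ → ℝ} {s : ℝ} {m : ℕ}

lemma blockAvg_nonneg (ha : ∀ i, 0 ≤ a i) (j : ℕ) : 0 ≤ blockAvg a m j :=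
  div_nonneg (sum_nonneg fun _ _ => ha _) m.cast_nonneg

lemma blockAvg_le (hm : 0 < m) (ha : ∀ i, a i ≤ s) (j : ℕ) : blockAvg a m j ≤ s := by
  rw [blockAvg, div_le_iff₀ (by positivity)]
  calc ∑ t ∈ range m, a (j * m + t) ≤ ∑ _t ∈ range m, s := sum_le_sum fun _ _ => ha _
    _ = s * m := by rw [sum_const, card_range, nsmul_eq_mul, mul_comm]

lemma bddAbove_abs_blockAvg_sub (hm : 0 < m) (ha₀ : ∀ i, 0 ≤ a i) (ha : ∀ i, a i ≤ s) (θ : ℝ) :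
    BddAbove (Set.range fun j => |blockAvg a m j - θ|) := by
  refine ⟨s + |θ|, ?_⟩
  rintro _ ⟨j, rfl⟩
  refine (abs_sub _ _).trans ?_
  rw [abs_of_nonneg (blockAvg_nonneg ha₀ j)]
  exact add_le_add_left (blockAvg_le hm ha j) _

lemma one_div_mul_sum_Icc_eq_blockAvg (b : ℕ → ℝ) (m j : ℕ) :
    1 / (m : ℝ) * ∑ i ∈ Icc 1 m, b (j * m + i) = blockAvg (fun i => b (i + 1)) m j := by
  simp only [blockAvg, one_div_mul_eq_div, range_eq_Ico, add_assoc]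
  rw [sum_Ico_add' (fun i => b (j * m + i)), zero_add, Ico_add_one_right_eq_Icc]

lemma sum_range_sub_blockAvg (hm : 0 < m) (j : ℕ) :
    ∑ t ∈ range m, (a (j * m + t) - blockAvg a m j) = 0 := by
  rw [sum_sub_distrib, sum_const, card_range, nsmul_eq_mul, blockAvg,
    mul_div_cancel₀ _ (by positivity), sub_self]

lemma sum_range_mul_sub_blockAvg (hm : 0 < m) (j : ℕ) :
    ∑ i ∈ range (j * m), (a i - blockAvg a m (i / m)) = 0 := by
  induction j with
  | zero => simp
  | succ j ih =>
    rw [add_mul, one_mul, sum_range_add, ih, zero_add, ← sum_range_sub_blockAvg hm j]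
    exact sum_congr rfl fun t ht => by rw [mul_add_div_eq_of_lt j (mem_range.1 ht)]

/-- The sum is at most `r s` in absolute value and, since the whole block sums to zero, also at
most `(m - r) s`. -/
lemma two_mul_abs_sum_range_sub_blockAvg_le (hm : 0 < m) (ha₀ : ∀ i, 0 ≤ a i)
    (ha : ∀ i, a i ≤ s) (j : ℕ) {r : ℕ} (hr : r ≤ m) :
    2 * |∑ t ∈ range r, (a (j * m + t) - blockAvg a m j)| ≤ m * s := by
  set x := fun t => a (j * m + t) - blockAvg a m j
  have hx : ∀ t, |x t| ≤ s := fun t => abs_sub_le_iff.2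
    ⟨by linarith [ha (j * m + t), blockAvg_nonneg ha₀ (m := m) j],
      by linarith [ha₀ (j * m + t), blockAvg_le hm ha j]⟩
  have hbound : ∀ U : Finset ℕ, |∑ t ∈ U, x t| ≤ U.card * s := fun U =>
    (abs_sum_le_sum_abs _ _).trans <| by
      simpa only [sum_const, nsmul_eq_mul] using sum_le_sum fun t (_ : t ∈ U) => hx t
  have htail : ∑ t ∈ range r, x t = -∑ t ∈ Ico r m, x t := by
    rw [eq_neg_iff_add_eq_zero, sum_range_add_sum_Ico _ hr, sum_range_sub_blockAvg hm]
  have h₁ := hbound (range r)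
  have h₂ := hbound (Ico r m)
  rw [← abs_neg, ← htail] at h₂
  simp only [card_range, Nat.card_Ico, Nat.cast_sub hr] at h₁ h₂
  linarith

lemma two_mul_abs_sum_range_sub_blockAvg_div_le (hm : 0 < m) (ha₀ : ∀ i, 0 ≤ a i)
    (ha : ∀ i, a i ≤ s) (k : ℕ) :
    2 * |∑ i ∈ range k, (a i - blockAvg a m (i / m))| ≤ m * s := by
  rw [← Nat.div_add_mod' k m, sum_range_add, sum_range_mul_sub_blockAvg hm, zero_add]
  convert two_mul_abs_sum_range_sub_blockAvg_le hm ha₀ ha (k / m) (Nat.mod_lt k hm).le using 5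
    with t ht
  rw [mul_add_div_eq_of_lt _ ((mem_range.1 ht).trans (Nat.mod_lt k hm))]

theorem abs_sum_sub_mul_le (a p : ℕ → ℝ) {s θ δ d : ℝ} {m l n : ℕ} (hm : 0 < m) (hln : l < n)
    (ha₀ : ∀ i, 0 ≤ a i) (ha : ∀ i, a i ≤ s) (hδ : ∀ j, |blockAvg a m j - θ| ≤ δ)
    (hp₀ : ∀ i, 0 ≤ p i) (hpd : ∀ i, p i ≤ d) (hp₁ : ∑ i ∈ Ico l n, p i ≤ 1)
    (hvar : ∑ i ∈ Ico l (n - 1), |p (i + 1) - p i| ≤ 2 * d) :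
    |∑ i ∈ Ico l n, (a i - θ) * p i| ≤ δ + 2 * m * s * d := by
  have hsplit : ∑ i ∈ Ico l n, (a i - θ) * p i =
      ∑ i ∈ Ico l n, (blockAvg a m (i / m) - θ) * p i +
        ∑ i ∈ Ico l n, p i * (a i - blockAvg a m (i / m)) := by
    rw [← sum_add_distrib]
    exact sum_congr rfl fun i _ => by ring
  have hmean : |∑ i ∈ Ico l n, (blockAvg a m (i / m) - θ) * p i| ≤ δ :=
    abs_sum_mul_le_of_abs_le _ (fun i _ => hδ _) ((abs_nonneg _).trans (hδ 0))
      (fun i _ => hp₀ i) hp₁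
  have hosc := abs_sum_Ico_mul_le p (fun i => a i - blockAvg a m (i / m)) (C := m * s / 2)
    (fun k => by linarith [two_mul_abs_sum_range_sub_blockAvg_div_le hm ha₀ ha k]) hln
  rw [abs_of_nonneg (hp₀ _), abs_of_nonneg (hp₀ _)] at hosc
  have hms : 0 ≤ m * s / 2 := by have := (ha₀ 0).trans (ha 0); positivity
  calc _ ≤ _ := hsplit ▸ abs_add_le _ _
    _ ≤ δ + m * s / 2 * (d + d + 2 * d) :=
        add_le_add hmean (hosc.trans (by gcongr <;> apply hpd))
    _ = δ + 2 * m * s * d := by ring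

end blockAvg

section dTV

variable {α : Type*} [MeasurableSpace α] (μ ν : Measure α)

lemma dTV_nonneg : 0 ≤ dTV μ ν := Real.iSup_nonneg fun _ => abs_nonneg _

variable [IsFiniteMeasure μ] [IsFiniteMeasure ν]

lemma abs_measureReal_sub_le_dTV {s : Set α} (hs : MeasurableSet s) :
    |μ.real s - ν.real s| ≤ dTV μ ν := by
  refine le_ciSup (f := fun s : {s : Set α // MeasurableSet s} => |μ.real s.1 - ν.real s.1|)
    ⟨μ.real Set.univ + ν.real Set.univ, ?_⟩ ⟨s, hs⟩
  rintro _ ⟨t, rfl⟩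
  have hμ : μ.real t ≤ μ.real Set.univ := measureReal_mono (Set.subset_univ _)
  have hν : ν.real t ≤ ν.real Set.univ := measureReal_mono (Set.subset_univ _)
  exact abs_sub_le_iff.2 ⟨by linarith [measureReal_nonneg (μ := ν) (s := t)],
    by linarith [measureReal_nonneg (μ := μ) (s := t)]⟩

lemma sum_abs_measureReal_sub_le_two_mul_dTV {ι : Type*} (S : Finset ι) {E : ι → Set α}
    (hE : ∀ i, MeasurableSet (E i)) (hdisj : Pairwise (Function.onFun Disjoint E)) :
    ∑ i ∈ S, |μ.real (E i) - ν.real (E i)| ≤ 2 * dTV μ ν := by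
  refine sum_abs_le_two_mul_of_abs_sum_le S _ fun U _ => ?_
  rw [sum_sub_distrib, ← measureReal_biUnion_finset (hdisj.set_pairwise _) fun i _ => hE i,
    ← measureReal_biUnion_finset (hdisj.set_pairwise _) fun i _ => hE i]
  exact abs_measureReal_sub_le_dTV μ ν (U.measurableSet_biUnion fun i _ => hE i)

end dTV

section Translate

variable {Ω : Type*} {T : Ω → ℕ} (k : ℕ)

lemma pairwise_disjoint_add_eq :
    Pairwise (Function.onFun Disjoint fun i => {ω | T ω + i = k}) :=
  fun i j hij => Set.disjoint_left.2 fun ω (hi : _ = k) (hj : _ = k) => hij (by omega)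

variable [MeasurableSpace Ω] (P : Measure Ω)

lemma measureReal_add_eq_le_dTV [IsFiniteMeasure P] (hT : Measurable T) (i : ℕ) :
    P.real {ω | T ω + i = k} ≤ dTV (P.map T) (P.map fun ω => T ω + 1) := by
  have hA : MeasurableSet {j : ℕ | j + i ≤ k} := .of_discrete
  have hdiff : {ω | T ω + i = k} = {ω | T ω + i ≤ k} \ {ω | T ω + 1 + i ≤ k} := by
    ext ω
    simp only [Set.mem_ofPred_eq, Set.mem_sdiff]
    omega
  have hsub : {ω | T ω + 1 + i ≤ k} ⊆ {ω | T ω + i ≤ k} := fun ω (h : _ ≤ k) =>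
    show _ ≤ k by omega
  rw [hdiff, measureReal_sdiff hsub (hT.add_const 1 hA)]
  calc _ = (P.map T).real {j | j + i ≤ k} - (P.map fun ω => T ω + 1).real {j | j + i ≤ k} := by
        rw [map_measureReal_apply hT hA, map_measureReal_apply (hT.add_const 1) hA]; rfl
    _ ≤ _ := (le_abs_self _).trans (abs_measureReal_sub_le_dTV _ _ hA)

lemma sum_measureReal_add_eq_le_one [IsProbabilityMeasure P] (hT : Measurable T)
    (S : Finset ℕ) :
    ∑ i ∈ S, P.real {ω | T ω + i = k} ≤ 1 := by
  rw [← measureReal_biUnion_finset ((pairwise_disjoint_add_eq k).set_pairwise _)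
    fun i _ => hT (.of_discrete : MeasurableSet {j | j + i = k})]
  exact measureReal_le_one

lemma sum_abs_measureReal_add_succ_eq_sub_le [IsFiniteMeasure P] (hT : Measurable T)
    (S : Finset ℕ) :
    ∑ i ∈ S, |P.real {ω | T ω + (i + 1) = k} - P.real {ω | T ω + i = k}| ≤
      2 * dTV (P.map T) (P.map fun ω => T ω + 1) := by
  refine le_of_eq_of_le (sum_congr rfl fun i _ => ?_)
    (sum_abs_measureReal_sub_le_two_mul_dTV (P.map T) (P.map fun ω => T ω + 1) S
      (E := fun i => {j : ℕ | j + i = k}) (fun _ => .of_discrete)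
      (pairwise_disjoint_add_eq (T := id) k))
  rw [abs_sub_comm, map_measureReal_apply hT .of_discrete,
    map_measureReal_apply (hT.add_const 1) .of_discrete]
  simp only [Set.preimage_ofPred_eq, add_assoc, add_comm 1]

end Translate

theorem stmt6_general {Ω : Type*} [MeasurableSpace Ω] (P : Measure Ω) [IsProbabilityMeasure P]
    (T : Ω → ℕ) (hT : Measurable T)
    (θ : ℝ) (θi : ℕ → ℝ) (hnn : ∀ i, 0 ≤ θi i)
    (hbdd : BddAbove (Set.range fun i => θi (i + 1)))
    (k : ℕ) (l n m : ℕ) (hln : l < n) (hm : 1 ≤ m) :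
    |∑ i ∈ Icc (l + 1) n, (θi i - θ) * (P {ω | T ω + i = k}).toReal| ≤
      (⨆ j : ℕ, |(1 / (m : ℝ)) * ∑ i ∈ Icc 1 m, θi (j * m + i) - θ|) +
        m * (2 * max θ (⨆ i, θi (i + 1)) + (1 / 6) * (⨆ i, θi (i + 1)) * m) *
          dTV (Measure.map T P) (Measure.map (fun ω => T ω + 1) P) := by
  have ha : ∀ i, θi (i + 1) ≤ ⨆ i, θi (i + 1) := le_ciSup hbdd
  have hlhs : ∑ i ∈ Icc (l + 1) n, (θi i - θ) * (P {ω | T ω + i = k}).toReal =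
      ∑ i ∈ Ico l n, (θi (i + 1) - θ) * P.real {ω | T ω + (i + 1) = k} := by
    rw [← Ico_add_one_right_eq_Icc,
      sum_Ico_add' (fun i => (θi i - θ) * P.real {ω | T ω + i = k})]
    rfl
  simp only [hlhs, one_div_mul_sum_Icc_eq_blockAvg]
  refine (abs_sum_sub_mul_le _ _ hm hln (fun i => hnn _) ha
    (le_ciSup (bddAbove_abs_blockAvg_sub hm (fun i => hnn _) ha θ)) (fun _ => measureReal_nonneg)
    (fun i => measureReal_add_eq_le_dTV k P hT _) ?_ ?_).trans ?_
  · simpa only [sum_map, addRightEmbedding_apply] using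
      sum_measureReal_add_eq_le_one k P hT ((Ico l n).map (addRightEmbedding 1))
  · simpa only [sum_map, addRightEmbedding_apply] using
      sum_abs_measureReal_add_succ_eq_sub_le k P hT ((Ico l (n - 1)).map (addRightEmbedding 1))
  · have hs : 0 ≤ (⨆ i, θi (i + 1)) * m := mul_nonneg ((hnn 1).trans (ha 0)) m.cast_nonneg
    have hd := dTV_nonneg (Measure.map T P) (Measure.map (fun ω => T ω + 1) P)
    rw [mul_assoc 2, mul_comm 2, mul_assoc (m : ℝ)]
    gcongr
    linarith [le_max_right θ (⨆ i, θi (i + 1))]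

/-- Lemma 5.2 (ii):
`|∑_{i=l+1}^n (θᵢ−θ) P[T+i=k]| ≤ δ(m,θ) + m(2θ*' + (1/6)θ_* m) d_TV(L(T),L(T+1))`. -/
theorem stmt6 {Ω : Type*} [MeasurableSpace Ω] (P : Measure Ω) [IsProbabilityMeasure P]
    (T : Ω → ℕ) (hT : Measurable T)
    (θ : ℝ) (hθ : 0 < θ) (θi : ℕ → ℝ) (hnn : ∀ i, 0 ≤ θi i)
    (hbdd : BddAbove (Set.range fun i => θi (i + 1)))
    (k : ℕ) (l n m : ℕ) (hln : l < n) (hm : 1 ≤ m) :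
    |∑ i ∈ Icc (l + 1) n, (θi i - θ) * (P {ω | T ω + i = k}).toReal| ≤
      (⨆ j : ℕ, |(1 / (m : ℝ)) * ∑ i ∈ Icc 1 m, θi (j * m + i) - θ|) +
        m * (2 * max θ (⨆ i, θi (i + 1)) + (1 / 6) * (⨆ i, θi (i + 1)) * m) *
          dTV (Measure.map T P) (Measure.map (fun ω => T ω + 1) P) :=
  stmt6_general P T hT θ θi hnn hbdd k l n m hln hm
end
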